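/- arXiv:2203.14848 — 3 statements merged into one kernel-verified Lean document; each statement's English description precedes it below -/
import Mathlib

section
/- Let α ∈ (0,1), β > 0, and let k⋆ > 0 be the unique positive root of 𝒟(k) = (α + βk²)·sinh(k) − k·cosh(k). Then for every integer n and every real ℓ, setting σ = √(n²k⋆² + ℓ²), the equation (α + βσ²)·σ·sinh(σ) − n²k⋆²·cosh(σ) = 0 holds if and only if ℓ = 0 and n ∈ {−1, 0, 1}. -/
/-!
Writing `σ² = n²k⋆² + ℓ²`, the left-hand side equals `σ·𝒟(σ) + ℓ²·cosh σ`. Since `𝒟(k) → +∞`,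
a point where `𝒟 < 0` would produce, by the intermediate value theorem, a root to its right;
hence `𝒟 ≥ 0` on `[k⋆, ∞)`. For `n ≠ 0` we have `σ ≥ k⋆`, so both summands are nonnegative and
vanish only when `ℓ = 0` and `σ = k⋆`, i.e. `|n| = 1`. For `n = 0` the equation reduces to
`(α + βℓ²)·|ℓ|·sinh |ℓ| = 0`.
-/

/-- The linear dispersion function `𝒟(k) = (α + βk²)·sinh(k) − k·cosh(k)`. -/
noncomputable def disp (α β k : ℝ) : ℝ :=
  (α + β * k ^ 2) * Real.sinh k - k * Real.cosh k

open Real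

section Disp

variable {α β : ℝ}

theorem continuous_disp : Continuous (disp α β) := by
  unfold disp
  fun_prop

theorem disp_eq_sinh_add_exp_neg (k : ℝ) :
    disp α β k = α * sinh k + k * ((β * k - 1) * sinh k - exp (-k)) := by
  rw [disp, ← cosh_sub_sinh]
  ring

theorem disp_pos_of_one_le (hα : 0 < α) {k : ℝ} (hk : 1 ≤ k) (hβk : 2 ≤ β * k) :
    0 < disp α β k := by
  have hsinh : k ≤ sinh k := self_le_sinh_iff.mpr (by linarith)
  have hexp : exp (-k) < 1 := exp_lt_one_iff.mpr (by linarith)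
  have hbracket : 0 < (β * k - 1) * sinh k - exp (-k) := by nlinarith
  rw [disp_eq_sinh_add_exp_neg]
  have : 0 < sinh k := by linarith
  positivity

theorem exists_gt_disp_eq_zero (hα : 0 < α) (hβ : 0 < β) {k : ℝ} (hk : disp α β k < 0) :
    ∃ c, k < c ∧ disp α β c = 0 := by
  set K := max k 1 + 2 / β
  have hβ2 : 0 < 2 / β := div_pos two_pos hβ
  have hkK : k < K := by linarith [le_max_left k 1]
  have hK : 0 < disp α β K := by
    refine disp_pos_of_one_le hα (by linarith [le_max_right k 1]) ?_
    have := mul_nonneg hβ.le (zero_le_one.trans (le_max_right k 1))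
    rw [mul_add, mul_div_cancel₀ _ hβ.ne']
    linarith
  obtain ⟨c, hc, hc0⟩ :=
    intermediate_value_Icc hkK.le continuous_disp.continuousOn ⟨hk.le, hK.le⟩
  refine ⟨c, lt_of_le_of_ne hc.1 ?_, hc0⟩
  rintro rfl
  linarith

variable {kstar : ℝ}

theorem disp_nonneg_of_le (hα : 0 < α) (hβ : 0 < β) (hk : 0 < kstar)
    (huniq : ∀ k : ℝ, 0 < k → disp α β k = 0 → k = kstar) {σ : ℝ} (hσ : kstar ≤ σ) :
    0 ≤ disp α β σ := by
  by_contra! hneg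
  obtain ⟨c, hσc, hc⟩ := exists_gt_disp_eq_zero hα hβ hneg
  have := huniq c (by linarith) hc
  linarith

theorem mul_disp_add_sq_mul_cosh_eq_zero_iff (hα : 0 < α) (hβ : 0 < β) (hk : 0 < kstar)
    (hroot : disp α β kstar = 0) (huniq : ∀ k : ℝ, 0 < k → disp α β k = 0 → k = kstar)
    {σ : ℝ} (hσ : kstar ≤ σ) (ℓ : ℝ) :
    σ * disp α β σ + ℓ ^ 2 * cosh σ = 0 ↔ σ = kstar ∧ ℓ = 0 := by
  have hσ0 : 0 < σ := hk.trans_le hσ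
  have hdisp : 0 ≤ σ * disp α β σ := mul_nonneg hσ0.le (disp_nonneg_of_le hα hβ hk huniq hσ)
  have hcosh : 0 ≤ ℓ ^ 2 * cosh σ := by positivity
  rw [add_eq_zero_iff_of_nonneg hdisp hcosh, mul_eq_zero, mul_eq_zero, or_iff_right hσ0.ne',
    or_iff_left (cosh_pos σ).ne', pow_eq_zero_iff two_ne_zero]
  exact and_congr_left' ⟨huniq σ hσ0, fun h => h ▸ hroot⟩

end Disp

theorem dispersion_eq_mul_disp_add {α β σ m ℓ : ℝ} (hσ : σ ^ 2 = m + ℓ ^ 2) :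
    (α + β * (m + ℓ ^ 2)) * σ * sinh σ - m * cosh σ
      = σ * disp α β σ + ℓ ^ 2 * cosh σ := by
  rw [disp, ← hσ]
  linear_combination cosh σ * hσ

theorem stmt_5_general (α β kstar : ℝ) (hα0 : 0 < α) (hβ : 0 < β)
    (hk : 0 < kstar) (hroot : disp α β kstar = 0)
    (huniq : ∀ k : ℝ, 0 < k → disp α β k = 0 → k = kstar) :
    ∀ (n : ℤ) (ℓ : ℝ),
      ((α + β * ((n : ℝ) ^ 2 * kstar ^ 2 + ℓ ^ 2)) *
            Real.sqrt ((n : ℝ) ^ 2 * kstar ^ 2 + ℓ ^ 2) *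
            Real.sinh (Real.sqrt ((n : ℝ) ^ 2 * kstar ^ 2 + ℓ ^ 2))
          - (n : ℝ) ^ 2 * kstar ^ 2 *
            Real.cosh (Real.sqrt ((n : ℝ) ^ 2 * kstar ^ 2 + ℓ ^ 2)) = 0)
        ↔ (ℓ = 0 ∧ (n = -1 ∨ n = 0 ∨ n = 1)) := by
  intro n ℓ
  rcases eq_or_ne n 0 with rfl | hn
  · have : 0 < α + β * ℓ ^ 2 := by positivity
    simp [sqrt_sq_eq_abs, this.ne']
  have hn1 : (1 : ℝ) ≤ (n : ℝ) ^ 2 :=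
    mod_cast (one_le_sq_iff_one_le_abs _).mpr (Int.one_le_abs hn)
  have hσ : sqrt ((n : ℝ) ^ 2 * kstar ^ 2 + ℓ ^ 2) ^ 2 = (n : ℝ) ^ 2 * kstar ^ 2 + ℓ ^ 2 :=
    sq_sqrt (by positivity)
  have hkσ : kstar ≤ sqrt ((n : ℝ) ^ 2 * kstar ^ 2 + ℓ ^ 2) := by
    refine le_sqrt_of_sq_le ?_
    nlinarith [sq_nonneg ℓ, sq_nonneg kstar]
  rw [dispersion_eq_mul_disp_add hσ,
    mul_disp_add_sq_mul_cosh_eq_zero_iff hα0 hβ hk hroot huniq hkσ, and_comm]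
  refine and_congr_right fun hℓ => ?_
  rw [hℓ, zero_pow two_ne_zero, add_zero, ← mul_pow, sqrt_sq_eq_abs, abs_mul, abs_of_pos hk,
    mul_eq_right₀ hk.ne', ← Int.cast_abs, Int.cast_eq_one, abs_eq zero_le_one]
  omega

/-- In Region I, with `k⋆` the unique positive root of the dispersion relation, for
`σ = √(n²k⋆² + ℓ²)` the equation `(α + βσ²)σ sinh σ − n²k⋆² cosh σ = 0` holds iff
`ℓ = 0` and `n ∈ {−1, 0, 1}`. -/
theorem stmt_5 (α β kstar : ℝ) (hα0 : 0 < α) (hα1 : α < 1) (hβ : 0 < β)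
    (hk : 0 < kstar) (hroot : disp α β kstar = 0)
    (huniq : ∀ k : ℝ, 0 < k → disp α β k = 0 → k = kstar) :
    ∀ (n : ℤ) (ℓ : ℝ),
      ((α + β * ((n : ℝ) ^ 2 * kstar ^ 2 + ℓ ^ 2)) *
            Real.sqrt ((n : ℝ) ^ 2 * kstar ^ 2 + ℓ ^ 2) *
            Real.sinh (Real.sqrt ((n : ℝ) ^ 2 * kstar ^ 2 + ℓ ^ 2))
          - (n : ℝ) ^ 2 * kstar ^ 2 *
            Real.cosh (Real.sqrt ((n : ℝ) ^ 2 * kstar ^ 2 + ℓ ^ 2)) = 0)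
        ↔ (ℓ = 0 ∧ (n = -1 ∨ n = 0 ∨ n = 1)) :=
  stmt_5_general α β kstar hα0 hβ hk hroot huniq
end

section
/- Let α > 0, β > 0 and k⋆ > 0 satisfy 𝒟(k⋆) = 0, where 𝒟(k) = (α + βk²)·sinh(k) − k·cosh(k). Set σ = tanh(k⋆) and T̃ = βk⋆²/α. Then σ² − T̃(3 − σ²) and 𝒟(2k⋆) have opposite signs: σ² − T̃(3 − σ²) > 0 if and only if 𝒟(2k⋆) < 0, σ² − T̃(3 − σ²) < 0 if and only if 𝒟(2k⋆) > 0, and σ² − T̃(3 − σ²) = 0 if and only if 𝒟(2k⋆) = 0. -/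
open Real

theorem opposite_signs_of_eq_neg_mul {p x y : ℝ} (hp : 0 < p) (h : y = -(p * x)) :
    (0 < x ↔ y < 0) ∧ (x < 0 ↔ 0 < y) ∧ (x = 0 ↔ y = 0) := by
  subst h
  simp [mul_pos_iff_of_pos_left hp, mul_neg_iff, hp, hp.not_gt, hp.ne']

theorem disp_two_mul_of_disp_eq_zero {α β k : ℝ} (h : disp α β k = 0) :
    disp α β (2 * k) = 2 * k * sinh k * (3 * β * k * cosh k - sinh k) := by
  unfold disp at h ⊢
  rw [sinh_two_mul, cosh_two_mul]
  linear_combination (2 * cosh k) * h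

theorem tanh_sq_sub_eq_of_disp_eq_zero {α β k : ℝ} (hα : α ≠ 0) (h : disp α β k = 0) :
    tanh k ^ 2 - β * k ^ 2 / α * (3 - tanh k ^ 2)
      = k * (sinh k - 3 * β * k * cosh k) / (α * cosh k) := by
  unfold disp at h
  have hc : cosh k ≠ 0 := (cosh_pos k).ne'
  rw [tanh_eq_sinh_div_cosh]
  field_simp
  linear_combination sinh k * h

theorem disp_two_mul_eq_neg_mul_of_disp_eq_zero {α β k : ℝ} (hα : α ≠ 0) (h : disp α β k = 0) :
    disp α β (2 * k)
      = -(2 * α * sinh k * cosh k * (tanh k ^ 2 - β * k ^ 2 / α * (3 - tanh k ^ 2))) := by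
  have hc : cosh k ≠ 0 := (cosh_pos k).ne'
  rw [disp_two_mul_of_disp_eq_zero h, tanh_sq_sub_eq_of_disp_eq_zero hα h]
  field_simp
  ring

theorem stmt_8_general (α β kstar : ℝ) (hα : 0 < α) (hk : 0 < kstar)
    (hroot : disp α β kstar = 0) (σ T : ℝ)
    (hσ : σ = Real.tanh kstar) (hT : T = β * kstar ^ 2 / α) :
    (0 < σ ^ 2 - T * (3 - σ ^ 2) ↔ disp α β (2 * kstar) < 0) ∧
    (σ ^ 2 - T * (3 - σ ^ 2) < 0 ↔ 0 < disp α β (2 * kstar)) ∧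
    (σ ^ 2 - T * (3 - σ ^ 2) = 0 ↔ disp α β (2 * kstar) = 0) := by
  subst hσ hT
  have hs : 0 < sinh kstar := sinh_pos_iff.mpr hk
  exact opposite_signs_of_eq_neg_mul (by positivity)
    (disp_two_mul_eq_neg_mul_of_disp_eq_zero hα.ne' hroot)

/-- At a positive root `k⋆` of the dispersion relation, `σ² − T̃(3 − σ²)` and `𝒟(2k⋆)`
have opposite signs. -/
theorem stmt_8 (α β kstar : ℝ) (hα : 0 < α) (hβ : 0 < β) (hk : 0 < kstar)
    (hroot : disp α β kstar = 0) (σ T : ℝ)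
    (hσ : σ = Real.tanh kstar) (hT : T = β * kstar ^ 2 / α) :
    (0 < σ ^ 2 - T * (3 - σ ^ 2) ↔ disp α β (2 * kstar) < 0) ∧
    (σ ^ 2 - T * (3 - σ ^ 2) < 0 ↔ 0 < disp α β (2 * kstar)) ∧
    (σ ^ 2 - T * (3 - σ ^ 2) = 0 ↔ disp α β (2 * kstar) = 0) :=
  stmt_8_general α β kstar hα hk hroot σ T hσ hT
end

section
/- Let α > 0, β > 0 and k⋆ > 0 satisfy 𝒟(k⋆) = 0 and 𝒟(2k⋆) ≠ 0, where 𝒟(k) = (α + βk²)·sinh(k) − k·cosh(k). Set σ = tanh(k⋆), T̃ = βk⋆²/α, c = −1 − k⋆(cosh(2k⋆) + 2)/𝒟(2k⋆), m̃₂₁⁽²⁾ = −(9αβ + 16)k⋆ + 12αβk⋆·cosh(2k⋆) − 3αβk⋆·cosh(4k⋆) + 8α(2c − 1)·sinh(2k⋆) + 4α(c + 2)·sinh(4k⋆), and let χ = (1/(4√(σ(1 + T̃))))·[ ((1 − σ²)(9 − σ²) + T̃(3 − σ²)(7 − σ²))/(σ² − T̃(3 − σ²)) + 8σ² − 2(1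 − σ²)²(1 + T̃) − 3σ²T̃/(1 + T̃) ]. Then σ² − T̃(3 − σ²) ≠ 0 and m̃₂₁⁽²⁾ = (32·k⋆·√(σ(1 + T̃))/((1 + T̃)(1 − σ²)²))·χ; in particular m̃₂₁⁽²⁾ and the Davey–Stewartson coefficient χ have the same sign. -/
open Real

namespace Real

theorem tanh_pos {x : ℝ} (hx : 0 < x) : 0 < tanh x := by
  rw [tanh_eq_sinh_div_cosh]
  exact div_pos (sinh_pos_iff.mpr hx) (cosh_pos x)

theorem one_sub_tanh_sq (x : ℝ) : 1 - tanh x ^ 2 = 1 / cosh x ^ 2 := by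
  have hc := (cosh_pos x).ne'
  rw [tanh_eq_sinh_div_cosh]
  field_simp
  exact cosh_sq_sub_sinh_sq x

theorem one_sub_tanh_sq_pos (x : ℝ) : 0 < 1 - tanh x ^ 2 :=
  sub_pos.mpr (tanh_sq_lt_one x)

theorem cosh_two_mul_eq_tanh (x : ℝ) : cosh (2 * x) = (1 + tanh x ^ 2) / (1 - tanh x ^ 2) := by
  have hc := (cosh_pos x).ne'
  rw [one_sub_tanh_sq, cosh_two_mul, tanh_eq_sinh_div_cosh]
  field_simp

theorem sinh_two_mul_eq_tanh (x : ℝ) : sinh (2 * x) = 2 * tanh x / (1 - tanh x ^ 2) := by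
  have hc := (cosh_pos x).ne'
  rw [one_sub_tanh_sq, sinh_two_mul, tanh_eq_sinh_div_cosh]
  field_simp

end Real

-- `coeffC`, `coeffM` and `dsBracket` are `c`, `m̃₂₁⁽²⁾` and `4√(σ(1 + T)) χ` of the statement.
noncomputable def coeffC (α β k : ℝ) : ℝ :=
  -1 - k * (cosh (2 * k) + 2) / disp α β (2 * k)

noncomputable def coeffM (α β k c : ℝ) : ℝ :=
  -(9 * α * β + 16) * k + 12 * α * β * k * cosh (2 * k) - 3 * α * β * k * cosh (4 * k)
    + 8 * α * (2 * c - 1) * sinh (2 * k) + 4 * α * (c + 2) * sinh (4 * k)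

noncomputable def dsBracket (σ T : ℝ) : ℝ :=
  ((1 - σ ^ 2) * (9 - σ ^ 2) + T * (3 - σ ^ 2) * (7 - σ ^ 2)) / (σ ^ 2 - T * (3 - σ ^ 2))
    + 8 * σ ^ 2 - 2 * (1 - σ ^ 2) ^ 2 * (1 + T) - 3 * σ ^ 2 * T / (1 + T)

theorem disp_eq_zero_iff (α β k : ℝ) : disp α β k = 0 ↔ (α + β * k ^ 2) * tanh k = k := by
  have hc := (cosh_pos k).ne'
  rw [disp, tanh_eq_sinh_div_cosh, mul_div_assoc', div_eq_iff hc, sub_eq_zero]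

section Root

variable {α β k σ T : ℝ} (hα : α ≠ 0) (hroot : disp α β k = 0)
  (hσ : σ = tanh k) (hT : T = β * k ^ 2 / α)
include hα hroot hσ hT

theorem mul_one_add_mul_eq_of_disp_eq_zero : α * (1 + T) * σ = k := by
  rw [← (disp_eq_zero_iff α β k).mp hroot, hσ, hT]
  field_simp

theorem mul_one_add_ne_zero_of_disp_eq_zero (hk : k ≠ 0) : σ * (1 + T) ≠ 0 := by
  have hrel := mul_one_add_mul_eq_of_disp_eq_zero hα hroot hσ hT
  contrapose! hk
  rw [← hrel]
  linear_combination α * hk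

theorem disp_two_mul_eq_of_disp_eq_zero (hk : k ≠ 0) :
    disp α β (2 * k) = -2 * k * (σ ^ 2 - T * (3 - σ ^ 2)) / ((1 + T) * (1 - σ ^ 2)) := by
  have hrel := mul_one_add_mul_eq_of_disp_eq_zero hα hroot hσ hT
  have h1T := right_ne_zero_of_mul (mul_one_add_ne_zero_of_disp_eq_zero hα hroot hσ hT hk)
  have h1σ : 1 - σ ^ 2 ≠ 0 := hσ ▸ (one_sub_tanh_sq_pos k).ne'
  have hβ : β * k ^ 2 = α * T := by rw [hT]; field_simp
  rw [eq_div_iff (mul_ne_zero h1T h1σ), disp, cosh_two_mul_eq_tanh, sinh_two_mul_eq_tanh, ← hσ]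
  field_simp
  linear_combination 4 * σ * (1 + T) * hβ + (1 + 4 * T) * hrel

theorem sq_sub_mul_ne_zero_of_disp_two_mul_ne_zero (hk : k ≠ 0) (h2k : disp α β (2 * k) ≠ 0) :
    σ ^ 2 - T * (3 - σ ^ 2) ≠ 0 := by
  rintro h
  simp [disp_two_mul_eq_of_disp_eq_zero hα hroot hσ hT hk, h] at h2k

theorem coeffM_coeffC_eq_of_disp_eq_zero (hk : k ≠ 0) (h2k : disp α β (2 * k) ≠ 0) :
    coeffM α β k (coeffC α β k) = 8 * k / ((1 + T) * (1 - σ ^ 2) ^ 2) * dsBracket σ T := by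
  have hrel := mul_one_add_mul_eq_of_disp_eq_zero hα hroot hσ hT
  have hD := disp_two_mul_eq_of_disp_eq_zero hα hroot hσ hT hk
  have hσT := mul_one_add_ne_zero_of_disp_eq_zero hα hroot hσ hT hk
  have hσ0 := left_ne_zero_of_mul hσT
  have h1T := right_ne_zero_of_mul hσT
  have h1σ : 1 - σ ^ 2 ≠ 0 := hσ ▸ (one_sub_tanh_sq_pos k).ne'
  have hden := sq_sub_mul_ne_zero_of_disp_two_mul_ne_zero hα hroot hσ hT hk h2k
  have hαv : α = k / (σ * (1 + T)) := by rw [← hrel]; field_simp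
  have hβv : β = α * T / k ^ 2 := by rw [hT]; field_simp
  have hc2 : cosh (2 * k) = (1 + σ ^ 2) / (1 - σ ^ 2) := hσ ▸ cosh_two_mul_eq_tanh k
  have hs2 : sinh (2 * k) = 2 * σ / (1 - σ ^ 2) := hσ ▸ sinh_two_mul_eq_tanh k
  have hc4 : cosh (4 * k) = cosh (2 * k) ^ 2 + sinh (2 * k) ^ 2 := by
    rw [← cosh_two_mul]; ring_nf
  have hs4 : sinh (4 * k) = 2 * sinh (2 * k) * cosh (2 * k) := by
    rw [← sinh_two_mul]; ring_nf
  rw [coeffM, coeffC, hD, hc4, hs4, hc2, hs2, dsBracket, hβv, hαv]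
  field_simp
  ring

end Root

/-- The coefficient `m̃₂₁⁽²⁾` is a positive multiple of the Davey–Stewartson cubic
coefficient `χ`; in particular they have the same sign. -/
theorem stmt_19 (α β kstar : ℝ) (hα : 0 < α) (hβ : 0 < β) (hk : 0 < kstar)
    (hroot : disp α β kstar = 0) (h2k : disp α β (2 * kstar) ≠ 0)
    (σ T c m χ : ℝ)
    (hσ : σ = Real.tanh kstar) (hT : T = β * kstar ^ 2 / α)
    (hc : c = -1 - kstar * (Real.cosh (2 * kstar) + 2) / disp α β (2 * kstar))
    (hm : m = -(9 * α * β + 16) * kstar + 12 * α * β * kstar * Real.cosh (2 * kstar)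
        - 3 * α * β * kstar * Real.cosh (4 * kstar)
        + 8 * α * (2 * c - 1) * Real.sinh (2 * kstar)
        + 4 * α * (c + 2) * Real.sinh (4 * kstar))
    (hχ : χ = 1 / (4 * Real.sqrt (σ * (1 + T))) *
        (((1 - σ ^ 2) * (9 - σ ^ 2) + T * (3 - σ ^ 2) * (7 - σ ^ 2)) /
            (σ ^ 2 - T * (3 - σ ^ 2))
          + 8 * σ ^ 2 - 2 * (1 - σ ^ 2) ^ 2 * (1 + T) - 3 * σ ^ 2 * T / (1 + T))) :
    σ ^ 2 - T * (3 - σ ^ 2) ≠ 0 ∧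
    m = 32 * kstar * Real.sqrt (σ * (1 + T)) / ((1 + T) * (1 - σ ^ 2) ^ 2) * χ ∧
    ((0 < m ↔ 0 < χ) ∧ (m < 0 ↔ χ < 0)) := by
  have hσ0 : 0 < σ := hσ ▸ tanh_pos hk
  have h1σ : 0 < 1 - σ ^ 2 := hσ ▸ one_sub_tanh_sq_pos kstar
  have h1T : 0 < 1 + T := by rw [hT]; positivity
  have hsqrt : 0 < √(σ * (1 + T)) := sqrt_pos.mpr (by positivity)
  have hden := sq_sub_mul_ne_zero_of_disp_two_mul_ne_zero hα.ne' hroot hσ hT hk.ne' h2k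
  have hmain : m = 32 * kstar * √(σ * (1 + T)) / ((1 + T) * (1 - σ ^ 2) ^ 2) * χ := by
    calc m = coeffM α β kstar (coeffC α β kstar) := by rw [hm, hc]; rfl
      _ = 8 * kstar / ((1 + T) * (1 - σ ^ 2) ^ 2) * dsBracket σ T :=
        coeffM_coeffC_eq_of_disp_eq_zero hα.ne' hroot hσ hT hk.ne' h2k
      _ = _ := by rw [hχ, dsBracket]; field_simp; ring
  have hpos : 0 < 32 * kstar * √(σ * (1 + T)) / ((1 + T) * (1 - σ ^ 2) ^ 2) := by positivity
  refine ⟨hden, hmain, ?_, ?_⟩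
  · rw [hmain, mul_pos_iff_of_pos_left hpos]
  · simpa only [hmain, smul_eq_mul] using smul_neg_iff_of_pos_left hpos (b := χ)
end
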